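/- arXiv:1806.08142 — 2 statements merged into one kernel-verified Lean document; each statement's English description precedes it below -/
import Mathlib

section
/- Let π₁ and π₂ be compatible Poisson tensors on ℝ^N, both not depending on the variable x_p for some fixed 1 ≤ p ≤ N, and let c be a Casimir function for π₂. Then for every λ ∈ ℝ the 2N×2N matrix field on ℝ^{2N} with blocks Π^{xx}(x,y) = 0, Π^{xy}(x,y) = π₂(x) + c(x)·E_pp, Π^{yx}(x,y) = π₂(x) − c(x)·E_pp, Π^{yy}(x,y) = ∑_{s=1}^N (∂π₂/∂x_s)(x) y_s + λ·π₁(x) is a Poisson tensor on ℝ^{2N} (denoted Π_{TM,λ,c(x)}). -/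
open scoped ContDiff

/-- Partial derivative `∂f/∂z_s` at `z`, for functions on `ℝ^ι`. -/
noncomputable def pd {ι : Type} [Fintype ι] [DecidableEq ι]
    (s : ι) (f : (ι → ℝ) → ℝ) (x : ι → ℝ) : ℝ :=
  fderiv ℝ f x (Pi.single s 1)

/-- A Poisson tensor on `ℝ^ι`: a smooth antisymmetric matrix field satisfying the
Jacobi condition. -/
def IsPoissonTensor {ι : Type} [Fintype ι] [DecidableEq ι]
    (π : (ι → ℝ) → Matrix ι ι ℝ) : Prop :=
  (∀ i j, ContDiff ℝ ∞ fun x => π x i j) ∧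
  (∀ x i j, π x j i = - π x i j) ∧
  (∀ x i j k, ∑ s, (pd s (fun y => π y i j) x * π x s k
      + pd s (fun y => π y k i) x * π x s j
      + pd s (fun y => π y j k) x * π x s i) = 0)

/-- `c` is a (smooth) Casimir function for `π`. -/
def IsCasimir {ι : Type} [Fintype ι] [DecidableEq ι]
    (π : (ι → ℝ) → Matrix ι ι ℝ) (c : (ι → ℝ) → ℝ) : Prop :=
  ContDiff ℝ ∞ c ∧ ∀ x j, ∑ s, pd s c x * π x s j = 0

/-- The matrix of partial derivatives `(∂π_{ij}/∂x_s)(x)`. -/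
noncomputable def pdMat {N : ℕ} (s : Fin N)
    (π : (Fin N → ℝ) → Matrix (Fin N) (Fin N) ℝ) (x : Fin N → ℝ) :
    Matrix (Fin N) (Fin N) ℝ :=
  Matrix.of fun i j => pd s (fun y => π y i j) x

/-- The `x`-part of a point `z = (x,y) ∈ ℝ^{2N}`. -/
def Xc {N : ℕ} (z : (Fin N ⊕ Fin N) → ℝ) : Fin N → ℝ := fun i => z (Sum.inl i)

/-- The `y`-part of a point `z = (x,y) ∈ ℝ^{2N}`. -/
def Yc {N : ℕ} (z : (Fin N ⊕ Fin N) → ℝ) : Fin N → ℝ := fun i => z (Sum.inr i)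

/-!
Write `Π` for the lifted tensor. Only its `yy`-block depends on `y`, and it does so affinely with
`∂Π^{yy}/∂y_t = ∂π₂/∂x_t`, so the Jacobiator of `Π` is computed blockwise by the number of
`y`-indices. With fewer than two it vanishes identically. The `(x,y,y)` component is the
Jacobiator of `π₂` plus terms that vanish because `c` is a Casimir of `π₂`, because `π₂` does
not depend on `x_p`, and because the two `c * ∂c` terms cancel. The `(y,y,y)` component is
`∑ₛ yₛ ∂ₛ Jac(π₂) + λ (J(π₁,π₂) + J(π₂,π₁))`, where `J(π₁,π₂) + J(π₂,π₁) = 0` is exactly the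
compatibility of `π₁` and `π₂`; its `c`-terms carry a factor `∂ₚ` of `π₁` or of `∂ₛπ₂`, hence
vanish.
-/

section PartialDerivative

variable {ι : Type} [Fintype ι] [DecidableEq ι] {f g : (ι → ℝ) → ℝ} {x : ι → ℝ} {s t : ι}

lemma pd_const (a : ℝ) : pd s (fun _ => a) x = 0 := by
  simp [pd]

lemma pd_neg : pd s (fun y => -f y) x = -pd s f x := by
  simp [pd, fderiv_fun_neg]

lemma pd_add (hf : DifferentiableAt ℝ f x) (hg : DifferentiableAt ℝ g x) :
    pd s (fun y => f y + g y) x = pd s f x + pd s g x := by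
  simp [pd, fderiv_fun_add hf hg]

lemma pd_sub (hf : DifferentiableAt ℝ f x) (hg : DifferentiableAt ℝ g x) :
    pd s (fun y => f y - g y) x = pd s f x - pd s g x := by
  simp [pd, fderiv_fun_sub hf hg]

lemma pd_mul (hf : DifferentiableAt ℝ f x) (hg : DifferentiableAt ℝ g x) :
    pd s (fun y => f y * g y) x = pd s f x * g x + f x * pd s g x := by
  simp only [pd, fderiv_fun_mul hf hg, add_apply, smul_apply, smul_eq_mul]
  ring

lemma pd_mul_const (hf : DifferentiableAt ℝ f x) (a : ℝ) :
    pd s (fun y => f y * a) x = pd s f x * a := by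
  rw [pd, pd, fderiv_mul_const hf, smul_apply, smul_eq_mul, mul_comm]

lemma pd_const_mul (hf : DifferentiableAt ℝ f x) (a : ℝ) :
    pd s (fun y => a * f y) x = a * pd s f x := by
  simp [pd, fderiv_const_mul hf]

lemma pd_sum {κ : Type*} (S : Finset κ) {F : κ → (ι → ℝ) → ℝ}
    (hF : ∀ k ∈ S, DifferentiableAt ℝ (F k) x) :
    pd s (fun y => ∑ k ∈ S, F k y) x = ∑ k ∈ S, pd s (F k) x := by
  simp [pd, fderiv_fun_sum hF]

lemma pd_apply (i : ι) : pd s (fun y => y i) x = (Pi.single s (1 : ℝ) : ι → ℝ) i := by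
  simp [pd, (hasFDerivAt_apply i x).fderiv]

lemma ContDiff.pd (hf : ContDiff ℝ ∞ f) (s : ι) : ContDiff ℝ ∞ (pd s f) :=
  (hf.fderiv_right (m := ∞) le_rfl).clm_apply contDiff_const

lemma pd_pd_comm (hf : ContDiff ℝ ∞ f) : pd s (pd t f) x = pd t (pd s f) x := by
  have hD : DifferentiableAt ℝ (fderiv ℝ f) x :=
    ((hf.fderiv_right (m := ∞) le_rfl).differentiable (by simp)).differentiableAt
  have h (u v : ι) : pd u (pd v f) x = fderiv ℝ (fderiv ℝ f) x (Pi.single u 1) (Pi.single v 1) := by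
    change fderiv ℝ (fun w => fderiv ℝ f w (Pi.single v 1)) x (Pi.single u 1) = _
    simp [fderiv_clm_apply hD (differentiableAt_const _)]
  rw [h, h, (hf.contDiffAt.isSymmSndFDerivAt (by simp [ENat.LEInfty.out])).eq]

lemma pd_mul_single_eq_zero {p : ι} (hf : pd p f x = 0) (t k : ι) :
    pd t f x * Matrix.single p p (1 : ℝ) t k = 0 := by
  by_cases ht : t = p
  · simp [ht, hf]
  · simp [Matrix.single_apply_of_row_ne (Ne.symm ht)]

end PartialDerivative

section Jacobiator

variable {ι : Type} [Fintype ι] [DecidableEq ι]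
  {π π' σ σ' : (ι → ℝ) → Matrix ι ι ℝ} {x : ι → ℝ} {i j k : ι}

noncomputable def jacobiator (π σ : (ι → ℝ) → Matrix ι ι ℝ) (x : ι → ℝ) (i j k : ι) : ℝ :=
  ∑ s, (pd s (fun y => π y i j) x * σ x s k + pd s (fun y => π y k i) x * σ x s j
    + pd s (fun y => π y j k) x * σ x s i)

lemma IsPoissonTensor.jacobiator_eq_zero (hπ : IsPoissonTensor π) (x : ι → ℝ) (i j k : ι) :
    jacobiator π π x i j k = 0 :=
  hπ.2.2 x i j k

lemma IsPoissonTensor.differentiableAt_apply (hπ : IsPoissonTensor π) (i j : ι) :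
    DifferentiableAt ℝ (fun y => π y i j) x :=
  ((hπ.1 i j).differentiable (by simp)).differentiableAt

lemma jacobiator_cycle : jacobiator π σ x i j k = jacobiator π σ x j k i :=
  Finset.sum_congr rfl fun _ _ => by ring

lemma jacobiator_add_left (hπ : ∀ i j, DifferentiableAt ℝ (fun y => π y i j) x)
    (hπ' : ∀ i j, DifferentiableAt ℝ (fun y => π' y i j) x) :
    jacobiator (fun y => π y + π' y) σ x i j k
      = jacobiator π σ x i j k + jacobiator π' σ x i j k := by
  simp only [jacobiator, Matrix.add_apply, pd_add (hπ _ _) (hπ' _ _), ← Finset.sum_add_distrib]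
  exact Finset.sum_congr rfl fun _ _ => by ring

lemma jacobiator_smul_left (hπ : ∀ i j, DifferentiableAt ℝ (fun y => π y i j) x) (a : ℝ) :
    jacobiator (fun y => a • π y) σ x i j k = a * jacobiator π σ x i j k := by
  simp only [jacobiator, Matrix.smul_apply, smul_eq_mul, pd_const_mul (hπ _ _), Finset.mul_sum]
  exact Finset.sum_congr rfl fun _ _ => by ring

lemma jacobiator_sum_smul_left {κ : Type*} (S : Finset κ) (a : κ → ℝ)
    {π : κ → (ι → ℝ) → Matrix ι ι ℝ} (hπ : ∀ l i j, DifferentiableAt ℝ (fun y => π l y i j) x) :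
    jacobiator (fun y => ∑ l ∈ S, a l • π l y) σ x i j k
      = ∑ l ∈ S, a l * jacobiator (π l) σ x i j k := by
  have hd (i j : ι) (l : κ) : DifferentiableAt ℝ (fun y => a l * π l y i j) x :=
    (hπ l i j).const_mul (a l)
  simp only [jacobiator, Matrix.sum_apply, Matrix.smul_apply, smul_eq_mul,
    pd_sum S (fun l _ => hd _ _ l), pd_const_mul (hπ _ _ _), Finset.mul_sum, Finset.sum_mul,
    ← Finset.sum_add_distrib]
  exact Finset.sum_comm.trans
    (Finset.sum_congr rfl fun _ _ => Finset.sum_congr rfl fun _ _ => by ring)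

lemma jacobiator_add_right :
    jacobiator π (fun y => σ y + σ' y) x i j k
      = jacobiator π σ x i j k + jacobiator π σ' x i j k := by
  simp only [jacobiator, Matrix.add_apply, ← Finset.sum_add_distrib]
  exact Finset.sum_congr rfl fun _ _ => by ring

lemma jacobiator_smul_right (a : ℝ) :
    jacobiator π (fun y => a • σ y) x i j k = a * jacobiator π σ x i j k := by
  simp only [jacobiator, Matrix.smul_apply, smul_eq_mul, Finset.mul_sum]
  exact Finset.sum_congr rfl fun _ _ => by ring

lemma jacobiator_sum_smul_right {κ : Type*} (S : Finset κ) (a : κ → ℝ)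
    (σ : κ → (ι → ℝ) → Matrix ι ι ℝ) :
    jacobiator π (fun y => ∑ l ∈ S, a l • σ l y) x i j k
      = ∑ l ∈ S, a l * jacobiator π (σ l) x i j k := by
  simp only [jacobiator, Matrix.sum_apply, Matrix.smul_apply, smul_eq_mul, Finset.mul_sum,
    ← Finset.sum_add_distrib]
  exact Finset.sum_comm.trans
    (Finset.sum_congr rfl fun _ _ => Finset.sum_congr rfl fun _ _ => by ring)

lemma jacobiator_add_smul_single_right {p : ι} (c : (ι → ℝ) → ℝ)
    (hp : ∀ i j, pd p (fun y => π y i j) x = 0) :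
    jacobiator π (fun y => σ y + c y • Matrix.single p p 1) x i j k = jacobiator π σ x i j k := by
  simp only [jacobiator, Matrix.add_apply, Matrix.smul_apply, smul_eq_mul]
  refine Finset.sum_congr rfl fun t _ => ?_
  linear_combination c x * (pd_mul_single_eq_zero (hp i j) t k
    + pd_mul_single_eq_zero (hp k i) t j + pd_mul_single_eq_zero (hp j k) t i)

lemma jacobiator_add_jacobiator_swap_eq_zero (hπ : IsPoissonTensor π) (hπ' : IsPoissonTensor π')
    (hsum : IsPoissonTensor fun y => π y + π' y) (x : ι → ℝ) (i j k : ι) :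
    jacobiator π π' x i j k + jacobiator π' π x i j k = 0 := by
  have h := hsum.jacobiator_eq_zero x i j k
  rw [jacobiator_add_left hπ.differentiableAt_apply hπ'.differentiableAt_apply,
    jacobiator_add_right, jacobiator_add_right, hπ.jacobiator_eq_zero, hπ'.jacobiator_eq_zero] at h
  linarith

end Jacobiator

lemma IsPoissonTensor.jacobiator_pdMat_add_jacobiator_pdMat_eq_zero {N : ℕ}
    {π : (Fin N → ℝ) → Matrix (Fin N) (Fin N) ℝ} (hπ : IsPoissonTensor π) (s : Fin N)
    (x : Fin N → ℝ) (i j k : Fin N) :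
    jacobiator (pdMat s π) π x i j k + jacobiator π (pdMat s π) x i j k = 0 := by
  have hd (i j : Fin N) : DifferentiableAt ℝ (fun y => π y i j) x := hπ.differentiableAt_apply i j
  have hdd (t i j : Fin N) : DifferentiableAt ℝ (pd t fun y => π y i j) x :=
    (((hπ.1 i j).pd t).differentiable (by simp)).differentiableAt
  calc _ = pd s (fun y => jacobiator π π y i j k) x := by
        simp only [jacobiator, pdMat, Matrix.of_apply]
        rw [pd_sum _ fun t _ => by fun_prop, ← Finset.sum_add_distrib]
        refine Finset.sum_congr rfl fun t _ => ?_
        rw [pd_add (by fun_prop) (by fun_prop), pd_add (by fun_prop) (by fun_prop),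
          pd_mul (hdd _ _ _) (hd _ _), pd_mul (hdd _ _ _) (hd _ _), pd_mul (hdd _ _ _) (hd _ _),
          pd_pd_comm (hπ.1 i j), pd_pd_comm (hπ.1 k i), pd_pd_comm (hπ.1 j k)]
        ring
    _ = 0 := by simp [hπ.jacobiator_eq_zero, pd_const]

lemma sum_pd_casimirShift_mul_eq_zero {ι : Type} [Fintype ι] [DecidableEq ι]
    {π : (ι → ℝ) → Matrix ι ι ℝ} {c : (ι → ℝ) → ℝ} {p : ι} {x : ι → ℝ} {a b d : ι}
    (hJ : jacobiator π π x a b d = 0) (hcas : ∀ j, ∑ s, pd s c x * π x s j = 0)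
    (hp : ∀ i j, pd p (fun y => π y i j) x = 0) :
    ∑ t, ((pd t (fun y => π y a b) x + pd t c x * Matrix.single p p 1 a b)
          * (π x t d + c x * Matrix.single p p 1 t d)
        + (pd t (fun y => π y d a) x - pd t c x * Matrix.single p p 1 d a)
          * (π x t b + c x * Matrix.single p p 1 t b)
        + pd t (fun y => π y b d) x * (π x t a - c x * Matrix.single p p 1 t a)) = 0 := by
  -- both sides are `1` exactly when `a = b = d = t = p`, so the `c * ∂c` terms cancel
  have hE (t : ι) : Matrix.single p p (1 : ℝ) a b * Matrix.single p p 1 t d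
      = Matrix.single p p 1 d a * Matrix.single p p 1 t b := by
    simp only [Matrix.single_apply]
    grind
  calc _ = jacobiator π π x a b d + Matrix.single p p 1 a b * ∑ t, pd t c x * π x t d
        - Matrix.single p p 1 d a * ∑ t, pd t c x * π x t b := by
        simp only [jacobiator, Finset.mul_sum, ← Finset.sum_add_distrib, ← Finset.sum_sub_distrib]
        refine Finset.sum_congr rfl fun t _ => ?_
        linear_combination c x * (pd_mul_single_eq_zero (hp a b) t d
          + pd_mul_single_eq_zero (hp d a) t b - pd_mul_single_eq_zero (hp b d) t a)
          + c x * pd t c x * hE t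
    _ = 0 := by rw [hJ, hcas, hcas]; ring

section ProductSpace

variable {N : ℕ} {z : (Fin N ⊕ Fin N) → ℝ} {t : Fin N}

lemma contDiff_Xc : ContDiff ℝ ∞ (Xc : ((Fin N ⊕ Fin N) → ℝ) → Fin N → ℝ) :=
  contDiff_pi.2 fun i => contDiff_apply ℝ ℝ (Sum.inl i)

lemma contDiff_Yc : ContDiff ℝ ∞ (Yc : ((Fin N ⊕ Fin N) → ℝ) → Fin N → ℝ) :=
  contDiff_pi.2 fun i => contDiff_apply ℝ ℝ (Sum.inr i)

lemma sumElim_Xc_Yc (z : (Fin N ⊕ Fin N) → ℝ) : Sum.elim (Xc z) (Yc z) = z := by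
  ext (i | i) <;> rfl

lemma Xc_add_smul_single_inl (h : ℝ) :
    Xc (z + h • Pi.single (Sum.inl t) 1) = Xc z + h • Pi.single t 1 := by
  ext i; simp [Xc, Pi.single_apply]

lemma Yc_add_smul_single_inl (h : ℝ) : Yc (z + h • Pi.single (Sum.inl t) 1) = Yc z := by
  ext i; simp [Yc]

lemma Xc_add_smul_single_inr (h : ℝ) : Xc (z + h • Pi.single (Sum.inr t) 1) = Xc z := by
  ext i; simp [Xc]

lemma Yc_add_smul_single_inr (h : ℝ) :
    Yc (z + h • Pi.single (Sum.inr t) 1) = Yc z + h • Pi.single t 1 := by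
  ext i; simp [Yc, Pi.single_apply]

variable {F : (Fin N → ℝ) → (Fin N → ℝ) → ℝ}

lemma pd_inl_comp (hF : DifferentiableAt ℝ (fun z => F (Xc z) (Yc z)) z) :
    pd (Sum.inl t) (fun z => F (Xc z) (Yc z)) z = pd t (fun x => F x (Yc z)) (Xc z) := by
  have hslice : DifferentiableAt ℝ (fun x => F x (Yc z)) (Xc z) := by
    have hι : DifferentiableAt ℝ (fun x => Sum.elim x (Yc z)) (Xc z) :=
      differentiableAt_pi.2 fun
        | .inl i => differentiableAt_apply i _ | .inr _ => differentiableAt_const _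
    exact DifferentiableAt.comp (g := fun z => F (Xc z) (Yc z)) _
      (by simpa only [sumElim_Xc_Yc] using hF) hι
  simp only [pd, ← hF.lineDeriv_eq_fderiv, ← hslice.lineDeriv_eq_fderiv, lineDeriv,
    Xc_add_smul_single_inl, Yc_add_smul_single_inl]

lemma pd_inr_comp (hF : DifferentiableAt ℝ (fun z => F (Xc z) (Yc z)) z) :
    pd (Sum.inr t) (fun z => F (Xc z) (Yc z)) z = pd t (fun y => F (Xc z) y) (Yc z) := by
  have hslice : DifferentiableAt ℝ (fun y => F (Xc z) y) (Yc z) := by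
    have hι : DifferentiableAt ℝ (fun y => Sum.elim (Xc z) y) (Yc z) :=
      differentiableAt_pi.2 fun
        | .inl _ => differentiableAt_const _ | .inr i => differentiableAt_apply i _
    exact DifferentiableAt.comp (g := fun z => F (Xc z) (Yc z)) _
      (by simpa only [sumElim_Xc_Yc] using hF) hι
  simp only [pd, ← hF.lineDeriv_eq_fderiv, ← hslice.lineDeriv_eq_fderiv, lineDeriv,
    Xc_add_smul_single_inr, Yc_add_smul_single_inr]

end ProductSpace

section LiftedTensor

variable {N : ℕ} {π₁ π₂ : (Fin N → ℝ) → Matrix (Fin N) (Fin N) ℝ} {p : Fin N}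
  {c : (Fin N → ℝ) → ℝ} {lam : ℝ}

variable (π₁ π₂ lam) in
noncomputable def yyBlock (y : Fin N → ℝ) : (Fin N → ℝ) → Matrix (Fin N) (Fin N) ℝ :=
  fun x => ∑ s, y s • pdMat s π₂ x + lam • π₁ x

-- `Π_{TM,λ,c(x)}`: the tangent lift of `π₂`, deformed by `λ π₁` and by the Casimir `c`
variable (π₁ π₂ p c lam) in
noncomputable def liftedTensor (z : (Fin N ⊕ Fin N) → ℝ) :
    Matrix (Fin N ⊕ Fin N) (Fin N ⊕ Fin N) ℝ :=
  Matrix.fromBlocks 0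
    (π₂ (Xc z) + c (Xc z) • Matrix.single p p 1)
    (π₂ (Xc z) - c (Xc z) • Matrix.single p p 1)
    (yyBlock π₁ π₂ lam (Yc z) (Xc z))

lemma yyBlock_apply (y x : Fin N → ℝ) (i j : Fin N) :
    yyBlock π₁ π₂ lam y x i j = ∑ s, y s * pd s (fun w => π₂ w i j) x + lam * π₁ x i j := by
  simp [yyBlock, pdMat, Matrix.sum_apply]

variable {z : (Fin N ⊕ Fin N) → ℝ} {i j : Fin N}

lemma liftedTensor_inl_inl : liftedTensor π₁ π₂ p c lam z (.inl i) (.inl j) = 0 := rfl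

lemma liftedTensor_inl_inr : liftedTensor π₁ π₂ p c lam z (.inl i) (.inr j)
    = π₂ (Xc z) i j + c (Xc z) * Matrix.single p p 1 i j := rfl

lemma liftedTensor_inr_inl : liftedTensor π₁ π₂ p c lam z (.inr i) (.inl j)
    = π₂ (Xc z) i j - c (Xc z) * Matrix.single p p 1 i j := rfl

lemma liftedTensor_inr_inr : liftedTensor π₁ π₂ p c lam z (.inr i) (.inr j)
    = yyBlock π₁ π₂ lam (Yc z) (Xc z) i j := rfl

lemma yyBlock_apply_swap (ha₁ : ∀ x i j, π₁ x j i = -π₁ x i j)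
    (ha₂ : ∀ x i j, π₂ x j i = -π₂ x i j) (y x : Fin N → ℝ) (i j : Fin N) :
    yyBlock π₁ π₂ lam y x j i = -yyBlock π₁ π₂ lam y x i j := by
  simp only [yyBlock_apply, ha₁ x i j, ha₂ _ i j, pd_neg, mul_neg, Finset.sum_neg_distrib]
  ring

lemma liftedTensor_apply_swap (ha₁ : ∀ x i j, π₁ x j i = -π₁ x i j)
    (ha₂ : ∀ x i j, π₂ x j i = -π₂ x i j) (z : (Fin N ⊕ Fin N) → ℝ) :
    ∀ I J, liftedTensor π₁ π₂ p c lam z J I = -liftedTensor π₁ π₂ p c lam z I J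
  | .inl _, .inl _ => by simp [liftedTensor_inl_inl]
  | .inl i, .inr j => by
    rw [liftedTensor_inl_inr, liftedTensor_inr_inl, ha₂,
      ← Matrix.transpose_apply (Matrix.single _ _ _), Matrix.transpose_single]
    ring
  | .inr i, .inl j => by
    rw [liftedTensor_inl_inr, liftedTensor_inr_inl, ha₂,
      ← Matrix.transpose_apply (Matrix.single _ _ _), Matrix.transpose_single]
    ring
  | .inr i, .inr j => by rw [liftedTensor_inr_inr, liftedTensor_inr_inr, yyBlock_apply_swap ha₁ ha₂]

lemma contDiff_yyBlock_apply (h₁ : ∀ i j, ContDiff ℝ ∞ fun x => π₁ x i j)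
    (h₂ : ∀ i j, ContDiff ℝ ∞ fun x => π₂ x i j) (i j : Fin N) :
    ContDiff ℝ ∞ fun z => yyBlock π₁ π₂ lam (Yc z) (Xc z) i j := by
  simp only [yyBlock_apply]
  exact (ContDiff.sum fun s _ => ((contDiff_apply ℝ ℝ s).comp contDiff_Yc).mul
    (((h₂ i j).pd s).comp contDiff_Xc)).add (contDiff_const.mul ((h₁ i j).comp contDiff_Xc))

lemma contDiff_liftedTensor_apply (h₁ : ∀ i j, ContDiff ℝ ∞ fun x => π₁ x i j)
    (h₂ : ∀ i j, ContDiff ℝ ∞ fun x => π₂ x i j) (hc : ContDiff ℝ ∞ c) :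
    ∀ I J, ContDiff ℝ ∞ fun z => liftedTensor π₁ π₂ p c lam z I J
  | .inl _, .inl _ => contDiff_const
  | .inl i, .inr j => ((h₂ i j).comp contDiff_Xc).add ((hc.comp contDiff_Xc).mul contDiff_const)
  | .inr i, .inl j => ((h₂ i j).comp contDiff_Xc).sub ((hc.comp contDiff_Xc).mul contDiff_const)
  | .inr i, .inr j => contDiff_yyBlock_apply h₁ h₂ i j

lemma pd_pdMat_apply_eq_zero (h : ∀ i j, ContDiff ℝ ∞ fun x => π₂ x i j)
    (hp : ∀ x i j, pd p (fun y => π₂ y i j) x = 0) (s : Fin N) (x : Fin N → ℝ) (i j : Fin N) :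
    pd p (fun y => pdMat s π₂ y i j) x = 0 := by
  change pd p (pd s fun y => π₂ y i j) x = 0
  rw [pd_pd_comm (h i j), show pd p (fun y => π₂ y i j) = fun _ => 0 from funext (hp · i j),
    pd_const]

lemma jacobiator_yyBlock_left (h₁ : ∀ i j, ContDiff ℝ ∞ fun x => π₁ x i j)
    (h₂ : ∀ i j, ContDiff ℝ ∞ fun x => π₂ x i j) (y : Fin N → ℝ)
    (σ : (Fin N → ℝ) → Matrix (Fin N) (Fin N) ℝ) (x : Fin N → ℝ) (i j k : Fin N) :
    jacobiator (yyBlock π₁ π₂ lam y) σ x i j k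
      = ∑ s, y s * jacobiator (pdMat s π₂) σ x i j k + lam * jacobiator π₁ σ x i j k := by
  have hd₁ (i j : Fin N) : DifferentiableAt ℝ (fun x => π₁ x i j) x :=
    (h₁ i j).differentiable (by simp) x
  have hd₂ (s i j : Fin N) : DifferentiableAt ℝ (fun x => pdMat s π₂ x i j) x :=
    ((h₂ i j).pd s).differentiable (by simp) x
  have hsum (i j : Fin N) : DifferentiableAt ℝ (fun x => (∑ s, y s • pdMat s π₂ x) i j) x := by
    simp only [Matrix.sum_apply, Matrix.smul_apply, smul_eq_mul]
    exact DifferentiableAt.fun_sum fun s _ => (hd₂ s i j).const_mul _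
  have hsmul (i j : Fin N) : DifferentiableAt ℝ (fun x => (lam • π₁ x) i j) x :=
    (hd₁ i j).const_mul lam
  unfold yyBlock
  rw [jacobiator_add_left hsum hsmul, jacobiator_sum_smul_left _ _ hd₂,
    jacobiator_smul_left hd₁]

lemma jacobiator_yyBlock_right (y : Fin N → ℝ) (π : (Fin N → ℝ) → Matrix (Fin N) (Fin N) ℝ)
    (x : Fin N → ℝ) (i j k : Fin N) :
    jacobiator π (yyBlock π₁ π₂ lam y) x i j k
      = ∑ s, y s * jacobiator π (pdMat s π₂) x i j k + lam * jacobiator π π₁ x i j k := by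
  unfold yyBlock
  rw [jacobiator_add_right, jacobiator_sum_smul_right, jacobiator_smul_right]

lemma pd_yyBlock_apply_right (y x : Fin N → ℝ) (t : Fin N) :
    pd t (fun y => yyBlock π₁ π₂ lam y x i j) y = pd t (fun w => π₂ w i j) x := by
  simp only [yyBlock_apply]
  rw [pd_add (by fun_prop) (by fun_prop), pd_sum _ fun _ _ => by fun_prop, pd_const]
  simp [pd_mul_const (differentiableAt_apply _ _), pd_apply, Pi.single_apply]

section Derivatives

variable {t : Fin N} {f : (Fin N → ℝ) → ℝ}

lemma pd_inl_comp_Xc (hf : DifferentiableAt ℝ f (Xc z)) :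
    pd (.inl t) (fun z => f (Xc z)) z = pd t f (Xc z) :=
  pd_inl_comp (F := fun x _ => f x) (hf.comp z (contDiff_Xc.differentiable (by simp) z))

lemma pd_inr_comp_Xc (hf : DifferentiableAt ℝ f (Xc z)) :
    pd (.inr t) (fun z => f (Xc z)) z = 0 :=
  (pd_inr_comp (F := fun x _ => f x) (hf.comp z (contDiff_Xc.differentiable (by simp) z))).trans
    (pd_const _)

lemma pd_liftedTensor_inl_inl (s : Fin N ⊕ Fin N) :
    pd s (fun z => liftedTensor π₁ π₂ p c lam z (.inl i) (.inl j)) z = 0 :=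
  pd_const 0

lemma pd_inl_liftedTensor_inl_inr (h₂ : ∀ i j, ContDiff ℝ ∞ fun x => π₂ x i j)
    (hc : ContDiff ℝ ∞ c) :
    pd (.inl t) (fun z => liftedTensor π₁ π₂ p c lam z (.inl i) (.inr j)) z
      = pd t (fun x => π₂ x i j) (Xc z) + pd t c (Xc z) * Matrix.single p p 1 i j := by
  have hd₂ := (h₂ i j).differentiable (by simp) (Xc z)
  have hdc := hc.differentiable (by simp) (Xc z)
  rw [← pd_mul_const hdc, ← pd_add hd₂ (hdc.mul_const _)]
  exact pd_inl_comp_Xc (f := fun x => π₂ x i j + c x * Matrix.single p p 1 i j) (by fun_prop)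

lemma pd_inr_liftedTensor_inl_inr (h₂ : ∀ i j, ContDiff ℝ ∞ fun x => π₂ x i j)
    (hc : ContDiff ℝ ∞ c) :
    pd (.inr t) (fun z => liftedTensor π₁ π₂ p c lam z (.inl i) (.inr j)) z = 0 :=
  pd_inr_comp_Xc (f := fun x => π₂ x i j + c x * Matrix.single p p 1 i j)
    ((((h₂ i j).add (hc.mul contDiff_const)).differentiable (by simp)) _)

lemma pd_inl_liftedTensor_inr_inl (h₂ : ∀ i j, ContDiff ℝ ∞ fun x => π₂ x i j)
    (hc : ContDiff ℝ ∞ c) :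
    pd (.inl t) (fun z => liftedTensor π₁ π₂ p c lam z (.inr i) (.inl j)) z
      = pd t (fun x => π₂ x i j) (Xc z) - pd t c (Xc z) * Matrix.single p p 1 i j := by
  have hd₂ := (h₂ i j).differentiable (by simp) (Xc z)
  have hdc := hc.differentiable (by simp) (Xc z)
  rw [← pd_mul_const hdc, ← pd_sub hd₂ (hdc.mul_const _)]
  exact pd_inl_comp_Xc (f := fun x => π₂ x i j - c x * Matrix.single p p 1 i j) (by fun_prop)

lemma pd_inr_liftedTensor_inr_inl (h₂ : ∀ i j, ContDiff ℝ ∞ fun x => π₂ x i j)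
    (hc : ContDiff ℝ ∞ c) :
    pd (.inr t) (fun z => liftedTensor π₁ π₂ p c lam z (.inr i) (.inl j)) z = 0 :=
  pd_inr_comp_Xc (f := fun x => π₂ x i j - c x * Matrix.single p p 1 i j)
    ((((h₂ i j).sub (hc.mul contDiff_const)).differentiable (by simp)) _)

lemma pd_inl_liftedTensor_inr_inr (h₁ : ∀ i j, ContDiff ℝ ∞ fun x => π₁ x i j)
    (h₂ : ∀ i j, ContDiff ℝ ∞ fun x => π₂ x i j) :
    pd (.inl t) (fun z => liftedTensor π₁ π₂ p c lam z (.inr i) (.inr j)) z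
      = pd t (fun x => yyBlock π₁ π₂ lam (Yc z) x i j) (Xc z) :=
  pd_inl_comp (F := fun x y => yyBlock π₁ π₂ lam y x i j)
    ((contDiff_yyBlock_apply h₁ h₂ i j).differentiable (by simp) z)

lemma pd_inr_liftedTensor_inr_inr (h₁ : ∀ i j, ContDiff ℝ ∞ fun x => π₁ x i j)
    (h₂ : ∀ i j, ContDiff ℝ ∞ fun x => π₂ x i j) :
    pd (.inr t) (fun z => liftedTensor π₁ π₂ p c lam z (.inr i) (.inr j)) z
      = pd t (fun x => π₂ x i j) (Xc z) :=
  (pd_inr_comp (F := fun x y => yyBlock π₁ π₂ lam y x i j)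
    ((contDiff_yyBlock_apply h₁ h₂ i j).differentiable (by simp) z)).trans
    (pd_yyBlock_apply_right _ _ t)

end Derivatives

end LiftedTensor

section Components

variable {N : ℕ} {π₁ π₂ : (Fin N → ℝ) → Matrix (Fin N) (Fin N) ℝ} {p : Fin N}
  {c : (Fin N → ℝ) → ℝ} {lam : ℝ} (z : (Fin N ⊕ Fin N) → ℝ) (a b d : Fin N)

lemma jacobiator_liftedTensor_inl_inl_inl :
    jacobiator (liftedTensor π₁ π₂ p c lam) (liftedTensor π₁ π₂ p c lam) z
      (.inl a) (.inl b) (.inl d) = 0 := by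
  simp [jacobiator, pd_liftedTensor_inl_inl]

lemma jacobiator_liftedTensor_inl_inl_inr (h₂ : ∀ i j, ContDiff ℝ ∞ fun x => π₂ x i j)
    (hc : ContDiff ℝ ∞ c) :
    jacobiator (liftedTensor π₁ π₂ p c lam) (liftedTensor π₁ π₂ p c lam) z
      (.inl a) (.inl b) (.inr d) = 0 := by
  simp only [jacobiator, Fintype.sum_sum_type, pd_liftedTensor_inl_inl,
    pd_inr_liftedTensor_inl_inr h₂ hc, pd_inr_liftedTensor_inr_inl h₂ hc]
  simp [liftedTensor_inl_inl]

lemma jacobiator_liftedTensor_inl_inr_inr (h₁ : ∀ i j, ContDiff ℝ ∞ fun x => π₁ x i j)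
    (hπ₂ : IsPoissonTensor π₂) (hc : IsCasimir π₂ c)
    (hp₂ : ∀ x i j, pd p (fun y => π₂ y i j) x = 0) :
    jacobiator (liftedTensor π₁ π₂ p c lam) (liftedTensor π₁ π₂ p c lam) z
      (.inl a) (.inr b) (.inr d) = 0 := by
  simp only [jacobiator, Fintype.sum_sum_type, pd_inl_liftedTensor_inl_inr hπ₂.1 hc.1,
    pd_inr_liftedTensor_inl_inr hπ₂.1 hc.1, pd_inl_liftedTensor_inr_inl hπ₂.1 hc.1,
    pd_inr_liftedTensor_inr_inl hπ₂.1 hc.1, pd_inr_liftedTensor_inr_inr h₁ hπ₂.1]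
  simp only [liftedTensor_inl_inl, liftedTensor_inl_inr, liftedTensor_inr_inl, mul_zero, zero_mul,
    add_zero, zero_add, ← Finset.sum_add_distrib]
  exact sum_pd_casimirShift_mul_eq_zero (hπ₂.jacobiator_eq_zero _ a b d) (hc.2 _) (hp₂ _)

lemma jacobiator_liftedTensor_inr_inr_inr (hπ₁ : IsPoissonTensor π₁) (hπ₂ : IsPoissonTensor π₂)
    (hcomp : IsPoissonTensor fun x => π₁ x + π₂ x)
    (hp₁ : ∀ x i j, pd p (fun y => π₁ y i j) x = 0)
    (hp₂ : ∀ x i j, pd p (fun y => π₂ y i j) x = 0) :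
    jacobiator (liftedTensor π₁ π₂ p c lam) (liftedTensor π₁ π₂ p c lam) z
      (.inr a) (.inr b) (.inr d) = 0 := by
  have hsplit : jacobiator (liftedTensor π₁ π₂ p c lam) (liftedTensor π₁ π₂ p c lam) z
      (.inr a) (.inr b) (.inr d)
      = jacobiator (yyBlock π₁ π₂ lam (Yc z)) (fun x => π₂ x + c x • Matrix.single p p 1) (Xc z)
          a b d
        + jacobiator π₂ (yyBlock π₁ π₂ lam (Yc z)) (Xc z) a b d := by
    simp only [jacobiator, Fintype.sum_sum_type, pd_inl_liftedTensor_inr_inr hπ₁.1 hπ₂.1,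
      pd_inr_liftedTensor_inr_inr hπ₁.1 hπ₂.1]
    simp only [liftedTensor_inl_inr, liftedTensor_inr_inr, Matrix.add_apply, Matrix.smul_apply,
      smul_eq_mul]
  rw [hsplit, jacobiator_yyBlock_left hπ₁.1 hπ₂.1, jacobiator_yyBlock_right,
    jacobiator_add_smul_single_right c (hp₁ _)]
  simp only [jacobiator_add_smul_single_right c (pd_pdMat_apply_eq_zero hπ₂.1 hp₂ _ _)]
  rw [add_add_add_comm, ← Finset.sum_add_distrib, ← mul_add,
    jacobiator_add_jacobiator_swap_eq_zero hπ₁ hπ₂ hcomp]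
  simp [← mul_add, hπ₂.jacobiator_pdMat_add_jacobiator_pdMat_eq_zero]

end Components

theorem stmt6_general {N : ℕ}
    (π₁ π₂ : (Fin N → ℝ) → Matrix (Fin N) (Fin N) ℝ)
    (hπ₁ : IsPoissonTensor π₁) (hπ₂ : IsPoissonTensor π₂)
    (hcomp : IsPoissonTensor (fun x => π₁ x + π₂ x))
    (p : Fin N)
    (hp₁ : ∀ x i j, pd p (fun y => π₁ y i j) x = 0)
    (hp₂ : ∀ x i j, pd p (fun y => π₂ y i j) x = 0)
    (c : (Fin N → ℝ) → ℝ) (hc : IsCasimir π₂ c)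
    (lam : ℝ) :
    IsPoissonTensor (fun z : (Fin N ⊕ Fin N) → ℝ =>
      Matrix.fromBlocks
        0
        (π₂ (Xc z) + c (Xc z) • Matrix.single p p (1 : ℝ))
        (π₂ (Xc z) - c (Xc z) • Matrix.single p p (1 : ℝ))
        (∑ s, Yc z s • pdMat s π₂ (Xc z) + lam • π₁ (Xc z))) := by
  show IsPoissonTensor (liftedTensor π₁ π₂ p c lam)
  refine ⟨contDiff_liftedTensor_apply hπ₁.1 hπ₂.1 hc.1,
    liftedTensor_apply_swap hπ₁.2.1 hπ₂.2.1, fun z I J K => ?_⟩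
  change jacobiator (liftedTensor π₁ π₂ p c lam) (liftedTensor π₁ π₂ p c lam) z I J K = 0
  rcases I with a | a <;> rcases J with b | b <;> rcases K with d | d
  · exact jacobiator_liftedTensor_inl_inl_inl z a b d
  · exact jacobiator_liftedTensor_inl_inl_inr z a b d hπ₂.1 hc.1
  · rw [jacobiator_cycle, jacobiator_cycle]
    exact jacobiator_liftedTensor_inl_inl_inr z d a b hπ₂.1 hc.1
  · exact jacobiator_liftedTensor_inl_inr_inr z a b d hπ₁.1 hπ₂ hc hp₂
  · rw [jacobiator_cycle]
    exact jacobiator_liftedTensor_inl_inl_inr z b d a hπ₂.1 hc.1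
  · rw [jacobiator_cycle]
    exact jacobiator_liftedTensor_inl_inr_inr z b d a hπ₁.1 hπ₂ hc hp₂
  · rw [jacobiator_cycle, jacobiator_cycle]
    exact jacobiator_liftedTensor_inl_inr_inr z d a b hπ₁.1 hπ₂ hc hp₂
  · exact jacobiator_liftedTensor_inr_inr_inr z a b d hπ₁ hπ₂ hcomp hp₁ hp₂

/-- tangent lift of a bi-Hamiltonian structure deformed by a Casimir,
`Π_{TM,λ,c(x)}`, is a Poisson tensor on `ℝ^{2N}`. -/
theorem stmt6 {N : ℕ} (hN : 1 ≤ N)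
    (π₁ π₂ : (Fin N → ℝ) → Matrix (Fin N) (Fin N) ℝ)
    (hπ₁ : IsPoissonTensor π₁) (hπ₂ : IsPoissonTensor π₂)
    (hcomp : IsPoissonTensor (fun x => π₁ x + π₂ x))
    (p : Fin N)
    (hp₁ : ∀ x i j, pd p (fun y => π₁ y i j) x = 0)
    (hp₂ : ∀ x i j, pd p (fun y => π₂ y i j) x = 0)
    (c : (Fin N → ℝ) → ℝ) (hc : IsCasimir π₂ c)
    (lam : ℝ) :
    IsPoissonTensor (fun z : (Fin N ⊕ Fin N) → ℝ =>
      Matrix.fromBlocks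
        0
        (π₂ (Xc z) + c (Xc z) • Matrix.single p p (1 : ℝ))
        (π₂ (Xc z) - c (Xc z) • Matrix.single p p (1 : ℝ))
        (∑ s, Yc z s • pdMat s π₂ (Xc z) + lam • π₁ (Xc z))) :=
  stmt6_general π₁ π₂ hπ₁ hπ₂ hcomp p hp₁ hp₂ c hc lam
end

section
/- Let π₁ and π₂ be compatible Poisson tensors on ℝ^N, both not depending on the variable x_p for some fixed 1 ≤ p ≤ N, let λ ∈ ℝ, and let c be a Casimir function for π₂. Let c' be a Casimir function for π₂ and f a smooth function such that ∑_{m=1}^N π_{2,mj}(x) (∂f/∂x_m)(x) = ∑_{n=1}^N π_{1,jn}(x) (∂c'/∂x_n)(x) for all j and all x (i.e. {f, x_j}_{π₂} = {x_j, c'}_{π₁}), and assume ∂c'/∂x_p ≡ 0 and ∂f/∂x_p ≡ 0. Then the functions F₁(x,y) = c'(x) and F₂(x,y) = ∑_{s=1}^N (∂c'/∂x_s)(x) y_s + λ f(x) are Casimir functions for the Poisson tensor Π_{TM,λ,c(x)} on ℝ^{2N} with blocks Π^{xx}=0, Π^{xy}=π₂(x)+c(x)E_pp, Π^{yx}=π₂(x)−c(x)E_pp,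 Π^{yy}=∑_s (∂π₂/∂x_s)(x) y_s + λπ₁(x); if moreover c is a linear Casimir function for π₂, they are also Casimir functions for the tensor Π_{TM,λ,c(y)} with c(y) in place of c(x). -/
open scoped ContDiff

/-- A linear function `c(x) = ∑ s, a_s x_s`. -/
def IsLinearFun {N : ℕ} (c : (Fin N → ℝ) → ℝ) : Prop :=
  ∃ a : Fin N → ℝ, ∀ x, c x = ∑ s, a s * x s

/-- The tensor `Π_{TM,λ,c(x)}` on `ℝ^{2N}`. -/
noncomputable def tensorLamCX {N : ℕ} (π₁ π₂ : (Fin N → ℝ) → Matrix (Fin N) (Fin N) ℝ)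
    (p : Fin N) (c : (Fin N → ℝ) → ℝ) (lam : ℝ) (z : (Fin N ⊕ Fin N) → ℝ) :
    Matrix (Fin N ⊕ Fin N) (Fin N ⊕ Fin N) ℝ :=
  Matrix.fromBlocks
    0
    (π₂ (Xc z) + c (Xc z) • Matrix.single p p (1 : ℝ))
    (π₂ (Xc z) - c (Xc z) • Matrix.single p p (1 : ℝ))
    (∑ s, Yc z s • pdMat s π₂ (Xc z) + lam • π₁ (Xc z))

/-- The tensor `Π_{TM,λ,c(y)}` on `ℝ^{2N}`. -/
noncomputable def tensorLamCY {N : ℕ} (π₁ π₂ : (Fin N → ℝ) → Matrix (Fin N) (Fin N) ℝ)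
    (p : Fin N) (c : (Fin N → ℝ) → ℝ) (lam : ℝ) (z : (Fin N ⊕ Fin N) → ℝ) :
    Matrix (Fin N ⊕ Fin N) (Fin N ⊕ Fin N) ℝ :=
  Matrix.fromBlocks
    0
    (π₂ (Xc z) + c (Yc z) • Matrix.single p p (1 : ℝ))
    (π₂ (Xc z) - c (Yc z) • Matrix.single p p (1 : ℝ))
    (∑ s, Yc z s • pdMat s π₂ (Xc z) + lam • π₁ (Xc z))

/-!
Write the gradient of a function on `ℝ^N × ℝ^N` as `(u, v)`, with `u` its `x`-part and `v` its
`y`-part. For a tensor with blocks `[[0, B], [C, D]]` the Casimir equations read `v ᵥ* C = 0` and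
`u ᵥ* B + v ᵥ* D = 0`. For `F₁ = c'(x)` we have `(u, v) = (∇c', 0)`, and for `F₂` we have
`u = ∑ₛ yₛ ∇(∂ₛc') + λ ∇f`, `v = ∇c'`. The `E_pp`-terms only see the `p`-th entries of `u` and `v`,
which vanish because `c'` and `f` do not depend on `x_p`, so these terms drop out whatever their
coefficient. The remaining terms vanish by `∇c' ᵥ* π₂ = 0`, by its derivative
`∇(∂ₛc') ᵥ* π₂ + ∇c' ᵥ* ∂ₛπ₂ = 0`, and by `∇f ᵥ* π₂ + ∇c' ᵥ* π₁ = 0`, which is the hypothesis on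
`f` rewritten with the antisymmetry of `π₁`.
-/

section Gradient

open Matrix

variable {ι : Type} [Fintype ι] [DecidableEq ι]

noncomputable def grad (F : (ι → ℝ) → ℝ) (x : ι → ℝ) : ι → ℝ := fun s => pd s F x

theorem isCasimir_iff_grad_vecMul (π : (ι → ℝ) → Matrix ι ι ℝ) (F : (ι → ℝ) → ℝ) :
    IsCasimir π F ↔ ContDiff ℝ ∞ F ∧ ∀ x, grad F x ᵥ* π x = 0 := by
  simp only [IsCasimir, funext_iff, vecMul, dotProduct, grad, Pi.zero_apply]

theorem IsCasimir.grad_vecMul_eq_zero {π : (ι → ℝ) → Matrix ι ι ℝ} {c : (ι → ℝ) → ℝ}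
    (hc : IsCasimir π c) (x : ι → ℝ) : grad c x ᵥ* π x = 0 :=
  ((isCasimir_iff_grad_vecMul π c).1 hc).2 x

theorem contDiff_pd {n : WithTop ℕ∞} (s : ι) {F : (ι → ℝ) → ℝ} (hF : ContDiff ℝ (n + 1) F) :
    ContDiff ℝ n (pd s F) :=
  (hF.fderiv_right le_rfl).clm_apply contDiff_const

theorem pd_pd_comm_s8 (i s : ι) {F : (ι → ℝ) → ℝ} (hF : ContDiff ℝ 2 F) (x : ι → ℝ) :
    pd i (pd s F) x = pd s (pd i F) x := by
  have hsymm : IsSymmSndFDerivAt ℝ F x :=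
    hF.contDiffAt.isSymmSndFDerivAt (by simp [minSmoothness_of_isRCLikeNormedField])
  have hd : DifferentiableAt ℝ (fderiv ℝ F) x :=
    (hF.fderiv_right (m := 1) (by norm_num)).differentiable one_ne_zero x
  have hflip (v : ι → ℝ) :
      fderiv ℝ (fun y => fderiv ℝ F y v) x = (fderiv ℝ (fderiv ℝ F) x).flip v := by
    rw [fderiv_clm_apply hd (differentiableAt_const v)]
    simp
  unfold pd
  rw [hflip, hflip]
  exact hsymm _ _

theorem pd_pd_eq_zero_of_pd_eq_zero {p : ι} (s : ι) {F : (ι → ℝ) → ℝ} (hF : ContDiff ℝ 2 F)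
    (hp : ∀ x, pd p F x = 0) (x : ι → ℝ) : pd p (pd s F) x = 0 := by
  rw [pd_pd_comm_s8 p s hF, show pd p F = 0 from funext hp]
  simp [pd]

variable {F G : (ι → ℝ) → ℝ} {x : ι → ℝ}

theorem grad_add (hF : DifferentiableAt ℝ F x) (hG : DifferentiableAt ℝ G x) :
    grad (fun y => F y + G y) x = grad F x + grad G x := by
  ext t
  simp [grad, pd, fderiv_fun_add hF hG]

theorem grad_mul (hF : DifferentiableAt ℝ F x) (hG : DifferentiableAt ℝ G x) :
    grad (fun y => F y * G y) x = F x • grad G x + G x • grad F x := by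
  ext t
  simp [grad, pd, fderiv_fun_mul hF hG]

theorem grad_const_mul (a : ℝ) (hF : DifferentiableAt ℝ F x) :
    grad (fun y => a * F y) x = a • grad F x := by
  ext t
  simp [grad, pd, fderiv_const_mul hF]

theorem grad_sum {κ : Type} [Fintype κ] {Φ : κ → (ι → ℝ) → ℝ}
    (hΦ : ∀ k, DifferentiableAt ℝ (Φ k) x) :
    grad (fun y => ∑ k, Φ k y) x = ∑ k, grad (Φ k) x := by
  ext t
  simp [grad, pd, fderiv_fun_sum fun k _ => hΦ k]

theorem grad_const (a : ℝ) : grad (fun _ : ι → ℝ => a) x = 0 := by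
  ext t
  simp [grad, pd]

theorem grad_apply (k : ι) : grad (fun y => y k) x = Pi.single k 1 := by
  ext t
  rw [grad, pd, show (fun y : ι → ℝ => y k) = ContinuousLinearMap.proj (R := ℝ) k from rfl,
    ContinuousLinearMap.fderiv]
  simp [Pi.single_apply, eq_comm]

theorem vecMul_single (u : ι → ℝ) (i j : ι) (a : ℝ) :
    u ᵥ* Matrix.single i j a = Pi.single j (u i * a) := by
  ext k
  simp [vecMul, dotProduct, Matrix.single_apply, Pi.single_apply, ite_and, eq_comm]

end Gradient

section Casimir

open Matrix

variable {N : ℕ} {π : (Fin N → ℝ) → Matrix (Fin N) (Fin N) ℝ} {c : (Fin N → ℝ) → ℝ}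

/-- The derivative in `x_s` of the Casimir identity `∑ᵢ ∂ᵢc πᵢⱼ = 0`. -/
theorem IsCasimir.grad_pd_vecMul_add_grad_vecMul_pdMat
    (hπ : ∀ i j, ContDiff ℝ ∞ fun x => π x i j) (hc : IsCasimir π c) (s : Fin N)
    (x : Fin N → ℝ) : grad (pd s c) x ᵥ* π x + grad c x ᵥ* pdMat s π x = 0 := by
  have hpd (i : Fin N) : ContDiff ℝ ∞ (pd i c) := contDiff_pd i hc.1
  ext j
  have hconst : (fun y => ∑ i, pd i c y * π y i j) = fun _ => 0 := funext (hc.2 · j)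
  have hderiv := congrFun (congrArg (grad · x) hconst) s
  rw [grad_sum fun i => ((hpd i).mul (hπ i j)).differentiable (by simp) x,
    grad_const] at hderiv
  simp only [grad_mul ((hpd _).differentiable (by simp) x)
    ((hπ _ j).differentiable (by simp) x)] at hderiv
  simp only [Finset.sum_apply, Pi.add_apply, Pi.smul_apply, Pi.zero_apply,
    smul_eq_mul, grad, pd_pd_comm_s8 s _ (hc.1.of_le ENat.LEInfty.out)] at hderiv
  simp only [vecMul, dotProduct, pdMat, Matrix.of_apply, Pi.add_apply, Pi.zero_apply, grad,
    ← Finset.sum_add_distrib]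
  rw [← hderiv]
  exact Finset.sum_congr rfl fun i _ => by ring

end Casimir

section TangentBundle

open Matrix

variable {N : ℕ}

@[fun_prop]
theorem contDiff_Xc_s8 {n : WithTop ℕ∞} : ContDiff ℝ n (Xc (N := N)) := by
  unfold Xc
  fun_prop

@[fun_prop]
theorem differentiable_Xc : Differentiable ℝ (Xc (N := N)) :=
  contDiff_Xc_s8.differentiable one_ne_zero

theorem grad_comp_Xc {g : (Fin N → ℝ) → ℝ} {z : (Fin N ⊕ Fin N) → ℝ}
    (hg : DifferentiableAt ℝ g (Xc z)) :
    grad (fun z => g (Xc z)) z = Sum.elim (grad g (Xc z)) 0 := by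
  let L : ((Fin N ⊕ Fin N) → ℝ) →L[ℝ] (Fin N → ℝ) :=
    ContinuousLinearMap.pi fun i => ContinuousLinearMap.proj (Sum.inl i)
  have hderiv : fderiv ℝ (fun z => g (Xc z)) z = (fderiv ℝ g (Xc z)).comp L :=
    (hg.hasFDerivAt.comp z L.hasFDerivAt).fderiv
  have hL_inl (i : Fin N) : L (Pi.single (Sum.inl i) 1) = Pi.single i 1 := by
    ext j; simp [L, Pi.single_apply]
  have hL_inr (i : Fin N) : L (Pi.single (Sum.inr i) 1) = 0 := by
    ext j; simp [L]
  ext (i | i) <;> simp [grad, pd, hderiv, hL_inl, hL_inr]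

noncomputable def tangentLift (g : (Fin N → ℝ) → ℝ) (z : (Fin N ⊕ Fin N) → ℝ) : ℝ :=
  ∑ s, pd s g (Xc z) * z (Sum.inr s)

theorem contDiff_tangentLift {n : WithTop ℕ∞} {g : (Fin N → ℝ) → ℝ} (hg : ContDiff ℝ (n + 1) g) :
    ContDiff ℝ n (tangentLift g) := by
  have hpd (s : Fin N) : ContDiff ℝ n (pd s g) := contDiff_pd s hg
  unfold tangentLift
  fun_prop

theorem grad_tangentLift {g : (Fin N → ℝ) → ℝ} (hg : ContDiff ℝ 2 g) (z : (Fin N ⊕ Fin N) → ℝ) :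
    grad (tangentLift g) z = Sum.elim (∑ s, Yc z s • grad (pd s g) (Xc z)) (grad g (Xc z)) := by
  have hpd (s : Fin N) : Differentiable ℝ (pd s g) :=
    (contDiff_pd (n := 1) s hg).differentiable one_ne_zero
  have hpdXc (s : Fin N) : DifferentiableAt ℝ (fun z => pd s g (Xc z)) z := by fun_prop
  have hcoord (s : Fin N) :
      DifferentiableAt ℝ (fun z : (Fin N ⊕ Fin N) → ℝ => z (Sum.inr s)) z := by
    fun_prop
  unfold tangentLift
  rw [grad_sum (Φ := fun s z => pd s g (Xc z) * z (Sum.inr s)) fun s => (hpdXc s).mul (hcoord s)]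
  simp only [grad_mul (hpdXc _) (hcoord _), grad_comp_Xc (hpd _ _), grad_apply]
  ext (i | i) <;> simp [grad, Yc, Pi.single_apply]

theorem grad_tangentLift_add_const_mul {g f : (Fin N → ℝ) → ℝ} (hg : ContDiff ℝ 2 g)
    (hf : Differentiable ℝ f) (lam : ℝ) (z : (Fin N ⊕ Fin N) → ℝ) :
    grad (fun z => tangentLift g z + lam * f (Xc z)) z =
      Sum.elim (∑ s, Yc z s • grad (pd s g) (Xc z) + lam • grad f (Xc z)) (grad g (Xc z)) := by
  have hfXc : DifferentiableAt ℝ (fun z => f (Xc z)) z := by fun_prop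
  rw [grad_add ((contDiff_tangentLift (n := 1) hg).differentiable one_ne_zero z)
      (hfXc.const_mul lam), grad_const_mul _ hfXc, grad_comp_Xc (hf _), grad_tangentLift hg]
  ext (i | i) <;> simp

variable (π₁ π₂ : (Fin N → ℝ) → Matrix (Fin N) (Fin N) ℝ) (p : Fin N) (lam : ℝ)

/-- `tensorLamCX` and `tensorLamCY` are `tangentTensor` with `γ = c(x)` and `γ = c(y)`. -/
noncomputable def tangentTensor (γ : ℝ) (x y : Fin N → ℝ) :
    Matrix (Fin N ⊕ Fin N) (Fin N ⊕ Fin N) ℝ :=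
  fromBlocks 0 (π₂ x + γ • single p p 1) (π₂ x - γ • single p p 1)
    (∑ s, y s • pdMat s π₂ x + lam • π₁ x)

theorem sumElim_vecMul_tangentTensor (γ : ℝ) (x y u v : Fin N → ℝ) :
    Sum.elim u v ᵥ* tangentTensor π₁ π₂ p lam γ x y =
      Sum.elim (v ᵥ* π₂ x - Pi.single p (v p * γ))
        (u ᵥ* π₂ x + Pi.single p (u p * γ) + (∑ s, y s • v ᵥ* pdMat s π₂ x + lam • v ᵥ* π₁ x)) := by
  simp [tangentTensor, vecMul_fromBlocks, vecMul_add, vecMul_sub, vecMul_smul, vecMul_sum,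
    vecMul_single]

variable {c : (Fin N → ℝ) → ℝ}

theorem isCasimir_tangentTensor_comp_Xc (hc : IsCasimir π₂ c) (hcp : ∀ x, pd p c x = 0)
    (γ : ((Fin N ⊕ Fin N) → ℝ) → ℝ) :
    IsCasimir (fun z => tangentTensor π₁ π₂ p lam (γ z) (Xc z) (Yc z)) (fun z => c (Xc z)) := by
  refine (isCasimir_iff_grad_vecMul _ _).2 ⟨hc.1.comp contDiff_Xc_s8, fun z => ?_⟩
  rw [grad_comp_Xc (hc.1.differentiable (by simp) _), sumElim_vecMul_tangentTensor]
  simp [hc.grad_vecMul_eq_zero, grad, hcp]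

theorem isCasimir_tangentTensor_tangentLift_add (hπ₁ : ∀ x i j, π₁ x j i = -π₁ x i j)
    (hπ₂ : ∀ i j, ContDiff ℝ ∞ fun x => π₂ x i j) (hc : IsCasimir π₂ c)
    {f : (Fin N → ℝ) → ℝ} (hf : ContDiff ℝ ∞ f)
    (hcond : ∀ x j, ∑ m, π₂ x m j * pd m f x = ∑ n, π₁ x j n * pd n c x)
    (hcp : ∀ x, pd p c x = 0) (hfp : ∀ x, pd p f x = 0) (γ : ((Fin N ⊕ Fin N) → ℝ) → ℝ) :
    IsCasimir (fun z => tangentTensor π₁ π₂ p lam (γ z) (Xc z) (Yc z))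
      (fun z => tangentLift c z + lam * f (Xc z)) := by
  have hcond' (x : Fin N → ℝ) : grad f x ᵥ* π₂ x + grad c x ᵥ* π₁ x = 0 := by
    have hanti : π₁ x = -(π₁ x)ᵀ := by ext i j; simp [hπ₁ x j i]
    rw [hanti, vecMul_neg, vecMul_transpose]
    ext j
    simp [vecMul, mulVec, dotProduct, grad, hcond x j, mul_comm]
  have hpp (s : Fin N) (x : Fin N → ℝ) : pd p (pd s c) x = 0 :=
    pd_pd_eq_zero_of_pd_eq_zero s (hc.1.of_le ENat.LEInfty.out) hcp x
  have hF : ContDiff ℝ ∞ fun z => tangentLift c z + lam * f (Xc z) :=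
    (contDiff_tangentLift hc.1).add (contDiff_const.mul (hf.comp contDiff_Xc_s8))
  refine (isCasimir_iff_grad_vecMul _ _).2 ⟨hF, fun z => ?_⟩
  rw [grad_tangentLift_add_const_mul (hc.1.of_le ENat.LEInfty.out) (hf.differentiable (by simp))]
  set x := Xc z
  have hup : (∑ s, Yc z s • grad (pd s c) x + lam • grad f x) p = 0 := by
    simp [grad, hpp, hfp]
  rw [sumElim_vecMul_tangentTensor, hup, zero_mul, Pi.single_zero, add_zero,
    ← Sum.elim_zero_zero]
  congr 1
  · simp [hc.grad_vecMul_eq_zero, grad, hcp]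
  · calc _ = ∑ s, Yc z s • (grad (pd s c) x ᵥ* π₂ x + grad c x ᵥ* pdMat s π₂ x)
          + lam • (grad f x ᵥ* π₂ x + grad c x ᵥ* π₁ x) := by
          simp only [add_vecMul, sum_vecMul, smul_vecMul, smul_add, Finset.sum_add_distrib]
          abel
      _ = 0 := by simp [hc.grad_pd_vecMul_add_grad_vecMul_pdMat hπ₂, hcond']

end TangentBundle

theorem stmt8_general {N : ℕ}
    (π₁ π₂ : (Fin N → ℝ) → Matrix (Fin N) (Fin N) ℝ)
    (hπ₁ : IsPoissonTensor π₁) (hπ₂ : IsPoissonTensor π₂)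
    (p : Fin N)
    (lam : ℝ)
    (c : (Fin N → ℝ) → ℝ)
    (c' : (Fin N → ℝ) → ℝ) (hc' : IsCasimir π₂ c')
    (f : (Fin N → ℝ) → ℝ) (hf : ContDiff ℝ ∞ f)
    (hcond : ∀ x j, ∑ m, π₂ x m j * pd m f x = ∑ n, π₁ x j n * pd n c' x)
    (hc'p : ∀ x, pd p c' x = 0) (hfp : ∀ x, pd p f x = 0) :
    IsCasimir (tensorLamCX π₁ π₂ p c lam) (fun z => c' (Xc z)) ∧
    IsCasimir (tensorLamCX π₁ π₂ p c lam)
      (fun z => (∑ s, pd s c' (Xc z) * z (Sum.inr s)) + lam * f (Xc z)) ∧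
    (IsLinearFun c →
      IsCasimir (tensorLamCY π₁ π₂ p c lam) (fun z => c' (Xc z)) ∧
      IsCasimir (tensorLamCY π₁ π₂ p c lam)
        (fun z => (∑ s, pd s c' (Xc z) * z (Sum.inr s)) + lam * f (Xc z))) := by
  have hF₁ := isCasimir_tangentTensor_comp_Xc π₁ π₂ p lam hc' hc'p
  have hF₂ := isCasimir_tangentTensor_tangentLift_add π₁ π₂ p lam hπ₁.2.1 hπ₂.1 hc' hf hcond
    hc'p hfp
  exact ⟨hF₁ (c ∘ Xc), hF₂ (c ∘ Xc), fun _ => ⟨hF₁ (c ∘ Yc), hF₂ (c ∘ Yc)⟩⟩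

/-- `F₁(x,y) = c'(x)` and `F₂(x,y) = ∑ s (∂c'/∂x_s)(x) y_s + λ f(x)` are
Casimir functions for `Π_{TM,λ,c(x)}`, and also for `Π_{TM,λ,c(y)}` when `c` is linear. -/
theorem stmt8 {N : ℕ} (hN : 1 ≤ N)
    (π₁ π₂ : (Fin N → ℝ) → Matrix (Fin N) (Fin N) ℝ)
    (hπ₁ : IsPoissonTensor π₁) (hπ₂ : IsPoissonTensor π₂)
    (hcomp : IsPoissonTensor (fun x => π₁ x + π₂ x))
    (p : Fin N)
    (hp₁ : ∀ x i j, pd p (fun y => π₁ y i j) x = 0)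
    (hp₂ : ∀ x i j, pd p (fun y => π₂ y i j) x = 0)
    (lam : ℝ)
    (c : (Fin N → ℝ) → ℝ) (hc : IsCasimir π₂ c)
    (c' : (Fin N → ℝ) → ℝ) (hc' : IsCasimir π₂ c')
    (f : (Fin N → ℝ) → ℝ) (hf : ContDiff ℝ ∞ f)
    (hcond : ∀ x j, ∑ m, π₂ x m j * pd m f x = ∑ n, π₁ x j n * pd n c' x)
    (hc'p : ∀ x, pd p c' x = 0) (hfp : ∀ x, pd p f x = 0) :
    IsCasimir (tensorLamCX π₁ π₂ p c lam) (fun z => c' (Xc z)) ∧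
    IsCasimir (tensorLamCX π₁ π₂ p c lam)
      (fun z => (∑ s, pd s c' (Xc z) * z (Sum.inr s)) + lam * f (Xc z)) ∧
    (IsLinearFun c →
      IsCasimir (tensorLamCY π₁ π₂ p c lam) (fun z => c' (Xc z)) ∧
      IsCasimir (tensorLamCY π₁ π₂ p c lam)
        (fun z => (∑ s, pd s c' (Xc z) * z (Sum.inr s)) + lam * f (Xc z))) :=
  stmt8_general π₁ π₂ hπ₁ hπ₂ p lam c c' hc' f hf hcond hc'p hfp
end
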